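/- arXiv:2010.05342 — 2 statements merged into one kernel-verified Lean document; each statement's English description precedes it below -/
import Mathlib

section
/- Let π_i* = max_{p ∈ [c_i, v̄]} (p − c_i)·D_i(p) with D_i(p) = x_*({v ∈ V_i : w_i(v) ≥ p}), attained at p_i* with p_i* > c_i whenever π_i* > 0. If the rival firms all price at marginal cost and the consumer never breaks ties in favor of firm i, then for every ε > 0 firm i can secure profit at least π_i* − ε by charging a uniform price slightly below p_i*: sup_{p ∈ [c_i, v̄]} (p − c_i)·w_i^-(p) ≥ π_i*, where w_i^-(p) = x_*({v ∈ V : v_i − p > max_{j ≠ i}(v_j − c_j)}). -/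
open MeasureTheory

/-- Let π_i* = max_{p ∈ [c_i, v̄]}(p − c_i)·D_i(p) be firm i's uniform monopoly
profit on its dominant segment V_i, with tie-favorable demand
D_i(p) = x_*({v ∈ V_i : w_i(v) ≥ p}), attained at p_i* (with p_i* > c_i whenever
π_i* > 0). If all rivals price at marginal cost and the consumer never breaks
ties in favor of firm i, firm i can still secure profits arbitrarily close to
π_i* by pricing just below p_i*: sup_{p ∈ [c_i, v̄]}(p − c_i)·w_i⁻(p) ≥ π_i*,
where w_i⁻(p) = x_*({v : v_i − p > max_{j ≠ i}(v_j − c_j)}) is strict demand. -/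
theorem secure_profit_at_least_uniform_monopoly (N : ℕ) (vbar : ℝ)
    (c : Fin (N+1) → ℝ) (hc0 : c 0 = 0) (hc : ∀ j, 0 ≤ c j)
    (i : Fin (N+1)) (hi : i ≠ 0) (hne : (Finset.univ.erase i).Nonempty)
    (xstar : Measure (Fin (N+1) → ℝ)) [IsProbabilityMeasure xstar]
    (Di wminus : ℝ → ℝ)
    (hD : ∀ p, Di p = (xstar {v | (∀ k, k ≠ i → v k - c k < v i - c i) ∧
      p ≤ v i - (Finset.univ.erase i).sup' hne (fun j => v j - c j)}).toReal)
    (hw : ∀ p, wminus p = (xstar {v | ∀ j, j ≠ i → v j - c j < v i - p}).toReal)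
    (pstar πstar : ℝ)
    (hpmem : pstar ∈ Set.Icc (c i) vbar)
    (hval : πstar = (pstar - c i) * Di pstar)
    (hmax : ∀ p ∈ Set.Icc (c i) vbar, (p - c i) * Di p ≤ πstar)
    (hpos : 0 < πstar → c i < pstar) :
    πstar ≤ sSup {r : ℝ | ∃ p ∈ Set.Icc (c i) vbar, r = (p - c i) * wminus p} := by
  set S := {r : ℝ | ∃ p ∈ Set.Icc (c i) vbar, r = (p - c i) * wminus p} with hS
  have hw_nonneg : ∀ p, 0 ≤ wminus p := by
    intro p; rw [hw]; exact ENNReal.toReal_nonneg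
  have hw_le_one : ∀ p, wminus p ≤ 1 := by
    intro p; rw [hw]
    have := prob_le_one (μ := xstar)
      (s := {v | ∀ j, j ≠ i → v j - c j < v i - p})
    calc (xstar {v | ∀ j, j ≠ i → v j - c j < v i - p}).toReal
        ≤ (1 : ENNReal).toReal := ENNReal.toReal_mono (by simp) this
      _ = 1 := by simp
  have hbdd : BddAbove S := by
    refine ⟨vbar - c i, ?_⟩
    rintro r ⟨p, hp, rfl⟩
    have h1 : p - c i ≤ vbar - c i := by linarith [hp.2]
    have h2 : 0 ≤ p - c i := by linarith [hp.1]
    calc (p - c i) * wminus p ≤ (p - c i) * 1 :=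
          mul_le_mul_of_nonneg_left (hw_le_one p) h2
      _ = p - c i := mul_one _
      _ ≤ vbar - c i := h1
  have h0S : (0 : ℝ) ∈ S := by
    refine ⟨c i, ⟨le_refl _, le_trans hpmem.1 hpmem.2⟩, by ring⟩
  rcases le_or_gt πstar 0 with hle | hlt
  · exact le_trans hle (le_csSup hbdd h0S)
  · have hcp : c i < pstar := hpos hlt
    set D := Di pstar with hDdef
    have hD_nonneg : 0 ≤ D := by rw [hDdef, hD]; exact ENNReal.toReal_nonneg
    have hD_le_one : D ≤ 1 := by
      rw [hDdef, hD]
      calc (xstar _).toReal ≤ (1 : ENNReal).toReal :=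
            ENNReal.toReal_mono (by simp) (prob_le_one)
        _ = 1 := by simp
    -- key: for p < pstar, D ≤ wminus p
    have key : ∀ p, p < pstar → D ≤ wminus p := by
      intro p hp
      rw [hDdef, hD, hw]
      apply ENNReal.toReal_mono (measure_ne_top _ _)
      apply measure_mono
      rintro v ⟨hv1, hv2⟩ j hj
      have hsup : v j - c j ≤ (Finset.univ.erase i).sup' hne (fun j => v j - c j) :=
        Finset.le_sup' (fun j => v j - c j) (Finset.mem_erase.mpr ⟨hj, Finset.mem_univ _⟩)
      have : v j - c j ≤ v i - pstar := le_trans hsup (by linarith)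
      linarith
    -- for every ε > 0, πstar ≤ sSup S + ε
    have hmain : ∀ ε > (0 : ℝ), πstar ≤ sSup S + ε := by
      intro ε hε
      set p := max (c i) (pstar - ε) with hpdef
      have hplt : p < pstar := max_lt hcp (by linarith)
      have hpIcc : p ∈ Set.Icc (c i) vbar :=
        ⟨le_max_left _ _, le_trans (le_of_lt hplt) hpmem.2⟩
      have hmem : (p - c i) * wminus p ∈ S := ⟨p, hpIcc, rfl⟩
      have h1 : (p - c i) * D ≤ (p - c i) * wminus p :=
        mul_le_mul_of_nonneg_left (key p hplt) (by linarith [hpIcc.1])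
      have h2 : (p - c i) * wminus p ≤ sSup S := le_csSup hbdd hmem
      have h3 : pstar - p ≤ ε := by
        have := le_max_right (c i) (pstar - ε); linarith
      have h4 : (pstar - p) * D ≤ ε := by
        calc (pstar - p) * D ≤ ε * D :=
              mul_le_mul_of_nonneg_right h3 hD_nonneg
          _ ≤ ε * 1 := mul_le_mul_of_nonneg_left hD_le_one (le_of_lt hε)
          _ = ε := mul_one _
      have : πstar = (p - c i) * D + (pstar - p) * D := by
        rw [hval]; ring
      linarith
    by_contra hcon
    push_neg at hcon
    have := hmain ((πstar - sSup S) / 2) (by linarith)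
    linarith
end

section
/- If firms are allowed to price strictly below marginal cost, then under the fully revealing segmentation there is an equilibrium with efficient allocation and zero profit for every firm: for each type v, letting i ∈ argmax_k (v_k − c_k), firm i prices at c_i and each other firm j prices at p_j = v_j − (v_i − c_i) ≤ c_j, the consumer is indifferent among all firms and breaks ties in favor of firm i; no firm has a profitable deviation. -/
/-- If firms may price strictly below marginal cost, then under the fully
revealing segmentation there is an efficient zero-profit equilibrium: for a
known consumer type v, let i ∈ argmax_k (v_k − c_k) (the efficient firm, with
the outside option indexed by 0, v_0 = 0, c_0 = 0). Firm i prices at c_i and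
every other firm j prices at p_j = v_j − (v_i − c_i) ≤ c_j. Then the consumer is
indifferent among all firms (and weakly prefers them to the outside option),
breaks ties in favor of firm i, firm i earns zero, any deviation p > c_i by firm
i loses the consumer, and any other firm can only sell at a loss. -/
theorem fully_revealing_zero_profit_equilibrium (N : ℕ) (hN : 2 ≤ N)
    (c : Fin (N+1) → ℝ) (hc0 : c 0 = 0) (hc : ∀ j, 0 ≤ c j)
    (v : Fin (N+1) → ℝ) (hv0 : v 0 = 0)
    (i : Fin (N+1)) (hi : i ≠ 0)
    (hargmax : ∀ k, v k - c k ≤ v i - c i)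
    (P : Fin (N+1) → ℝ)
    (hP0 : P 0 = 0) (hPi : P i = c i)
    (hPj : ∀ j, j ≠ 0 → j ≠ i → P j = v j - (v i - c i)) :
    (∀ j, j ≠ 0 → j ≠ i → P j ≤ c j) ∧
    (∀ j, j ≠ 0 → v j - P j = v i - c i) ∧
    (∀ j, v j - P j ≤ v i - P i) ∧
    P i - c i = 0 ∧
    (∀ q, c i < q → ∃ j, j ≠ i ∧ v i - q < v j - P j) ∧
    (∀ j, j ≠ 0 → j ≠ i → ∀ q, v i - c i < v j - q → q - c j < 0) := by
  have hle : ∀ j, j ≠ 0 → j ≠ i → P j ≤ c j := by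
    intro j hj0 hji
    rw [hPj j hj0 hji]
    have := hargmax j
    linarith
  have hind : ∀ j, j ≠ 0 → v j - P j = v i - c i := by
    intro j hj0
    by_cases hji : j = i
    · subst hji; rw [hPi]
    · rw [hPj j hj0 hji]; ring
  refine ⟨hle, hind, ?_, by rw [hPi]; ring, ?_, ?_⟩
  · intro j
    by_cases hj0 : j = 0
    · subst hj0
      rw [hv0, hP0, hPi]
      have := hargmax 0
      rw [hv0, hc0] at this
      linarith
    · rw [hind j hj0, hPi]
  · intro q hq
    have hN2 : 2 < N + 1 := by omega
    set j1 : Fin (N+1) := ⟨1, by omega⟩ with hj1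
    set j2 : Fin (N+1) := ⟨2, by omega⟩ with hj2
    have h1 : j1 ≠ 0 := by simp [hj1, Fin.ext_iff]
    have h2 : j2 ≠ 0 := by simp [hj2, Fin.ext_iff]
    have h12 : j1 ≠ j2 := by simp [hj1, hj2, Fin.ext_iff]
    by_cases hi1 : i = j1
    · refine ⟨j2, by rw [hi1]; exact h12.symm, ?_⟩
      rw [hind j2 h2]
      linarith
    · refine ⟨j1, fun h => hi1 h.symm, ?_⟩
      rw [hind j1 h1]
      linarith
  · intro j hj0 hji q hq
    have := hargmax j
    linarith
end
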